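/- Let U ⊆ ℂ be open, let P : U → ℂ be holomorphic, and let u, σ : U → ℝ be twice continuously differentiable functions satisfying Δu = 4·(e^{2u} − e^{−2u}·|P|²) and Δσ = 4·e^{2σ} on U. If the function u − σ attains its infimum over U at some point of U, then u ≥ σ everywhere on U. -/

import Mathlib

/-- Directional derivative of `f : ℂ → E` at `z` in the direction `v ∈ ℂ`. -/
noncomputable def dirDeriv {E : Type*} [NormedAddCommGroup E] [NormedSpace ℝ E]
    (v : ℂ) (f : ℂ → E) (z : ℂ) : E :=
  deriv (fun t : ℝ => f (z + t • v)) 0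

/-- The flat Laplacian `Δf = ∂²f/∂x² + ∂²f/∂y²` of a function on `ℂ ≅ ℝ²`
(applied componentwise when the target is `ℂ`). -/
noncomputable def flatLaplacian {E : Type*} [NormedAddCommGroup E] [NormedSpace ℝ E]
    (f : ℂ → E) (z : ℂ) : E :=
  dirDeriv 1 (dirDeriv 1 f) z + dirDeriv Complex.I (dirDeriv Complex.I f) z

/-!
At a minimum `z₀` of `u - σ` the Laplacian of `u - σ` is nonnegative, so
`4 e^{2σ} = Δσ ≤ Δu = 4 (e^{2u} - e^{-2u} |P|²) ≤ 4 e^{2u}` at `z₀`, whence `σ z₀ ≤ u z₀`;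
since `u - σ` is smallest at `z₀`, it is nonnegative everywhere.
-/

open Filter Topology

/- If `f'' x₀ < 0`, the second derivative test makes `x₀` also a local maximum, so `f` is
locally constant near `x₀` and `f'' x₀ = 0`. -/
theorem IsLocalMin.deriv_deriv_nonneg {f : ℝ → ℝ} {x₀ : ℝ} (hmin : IsLocalMin f x₀)
    (hc : ContinuousAt f x₀) : 0 ≤ deriv (deriv f) x₀ := by
  by_contra! hneg
  have hmax : IsLocalMax f x₀ := isLocalMax_of_deriv_deriv_neg hneg hmin.deriv_eq_zero hc
  have hconst : f =ᶠ[𝓝 x₀] fun _ => f x₀ := by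
    filter_upwards [hmin, hmax] with x h₁ h₂ using le_antisymm h₂ h₁
  have hderiv : deriv f =ᶠ[𝓝 x₀] fun _ => 0 := by
    simpa using hconst.deriv
  simp [hderiv.deriv_eq] at hneg

section dirDeriv

variable {E : Type*} [NormedAddCommGroup E] [NormedSpace ℝ E]

theorem dirDeriv_dirDeriv (v : ℂ) (f : ℂ → E) (z : ℂ) :
    dirDeriv v (dirDeriv v f) z = deriv (deriv fun t : ℝ => f (z + t • v)) 0 := by
  unfold dirDeriv
  congr 1
  funext t
  simpa [add_smul, add_assoc, add_comm] using
    deriv_comp_const_add (fun s : ℝ => f (z + s • v)) t 0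

theorem ContDiffAt.comp_line {n : WithTop ℕ∞} {f : ℂ → E} {z : ℂ} (hf : ContDiffAt ℝ n f z)
    (v : ℂ) : ContDiffAt ℝ n (fun t : ℝ => f (z + t • v)) 0 := by
  refine ContDiffAt.comp (f := fun t : ℝ => z + t • v) 0 ?_ (by fun_prop)
  simpa using hf

theorem dirDeriv_dirDeriv_sub {f g : ℂ → E} {z : ℂ} (hf : ContDiffAt ℝ 2 f z)
    (hg : ContDiffAt ℝ 2 g z) (v : ℂ) :
    dirDeriv v (dirDeriv v (f - g)) z
      = dirDeriv v (dirDeriv v f) z - dirDeriv v (dirDeriv v g) z := by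
  simpa [dirDeriv_dirDeriv, iteratedDeriv_succ] using
    iteratedDeriv_fun_sub (n := 2) (hf.comp_line v) (hg.comp_line v)

theorem flatLaplacian_sub {f g : ℂ → E} {z : ℂ} (hf : ContDiffAt ℝ 2 f z)
    (hg : ContDiffAt ℝ 2 g z) :
    flatLaplacian (f - g) z = flatLaplacian f z - flatLaplacian g z := by
  simp only [flatLaplacian, dirDeriv_dirDeriv_sub hf hg]
  abel

end dirDeriv

theorem IsLocalMin.dirDeriv_dirDeriv_nonneg {f : ℂ → ℝ} {z : ℂ} (hmin : IsLocalMin f z)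
    (hc : ContinuousAt f z) (v : ℂ) : 0 ≤ dirDeriv v (dirDeriv v f) z := by
  have hline : ContinuousAt (fun t : ℝ => z + t • v) 0 := by fun_prop
  rw [dirDeriv_dirDeriv]
  refine IsLocalMin.deriv_deriv_nonneg ?_ ?_
  · exact IsLocalMin.comp_continuous (g := fun t : ℝ => z + t • v) (by simpa using hmin) hline
  · exact ContinuousAt.comp (g := f) (by simpa using hc) hline

theorem IsLocalMin.flatLaplacian_nonneg {f : ℂ → ℝ} {z : ℂ} (hmin : IsLocalMin f z)
    (hc : ContinuousAt f z) : 0 ≤ flatLaplacian f z :=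
  add_nonneg (hmin.dirDeriv_dirDeriv_nonneg hc 1) (hmin.dirDeriv_dirDeriv_nonneg hc Complex.I)

theorem statement6_general (U : Set ℂ) (hU : IsOpen U)
    (P : ℂ → ℂ)
    (u σ : ℂ → ℝ) (hu : ContDiffOn ℝ 2 u U) (hσ : ContDiffOn ℝ 2 σ U)
    (hu_eq : ∀ z ∈ U, flatLaplacian u z
      = 4 * (Real.exp (2 * u z) - Real.exp (-(2 * u z)) * ‖P z‖ ^ 2))
    (hσ_eq : ∀ z ∈ U, flatLaplacian σ z = 4 * Real.exp (2 * σ z))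
    (hmin : ∃ z₀ ∈ U, ∀ z ∈ U, u z₀ - σ z₀ ≤ u z - σ z) :
    ∀ z ∈ U, σ z ≤ u z := by
  obtain ⟨z₀, hz₀, hm⟩ := hmin
  have hu₀ : ContDiffAt ℝ 2 u z₀ := hu.contDiffAt (hU.mem_nhds hz₀)
  have hσ₀ : ContDiffAt ℝ 2 σ z₀ := hσ.contDiffAt (hU.mem_nhds hz₀)
  have hlocmin : IsLocalMin (u - σ) z₀ := eventually_of_mem (hU.mem_nhds hz₀) hm
  have hlap : 0 ≤ flatLaplacian u z₀ - flatLaplacian σ z₀ := by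
    rw [← flatLaplacian_sub hu₀ hσ₀]
    exact hlocmin.flatLaplacian_nonneg (hu₀.sub hσ₀).continuousAt
  rw [hu_eq z₀ hz₀, hσ_eq z₀ hz₀] at hlap
  have hexp : Real.exp (2 * σ z₀) ≤ Real.exp (2 * u z₀) := by
    nlinarith [Real.exp_pos (-(2 * u z₀)), sq_nonneg ‖P z₀‖]
  have hz₀le : σ z₀ ≤ u z₀ := by linarith [Real.exp_le_exp.1 hexp]
  intro z hz
  linarith [hm z hz]

/-- Lemma 6.1, first part: if `Δu = 4(e^{2u} − e^{−2u}|P|²)` and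
`Δσ = 4e^{2σ}` on an open set `U`, with `P` holomorphic, and `u − σ` attains its
infimum over `U` at a point of `U`, then `u ≥ σ` on `U`. -/
theorem statement6 (U : Set ℂ) (hU : IsOpen U)
    (P : ℂ → ℂ) (hP : DifferentiableOn ℂ P U)
    (u σ : ℂ → ℝ) (hu : ContDiffOn ℝ 2 u U) (hσ : ContDiffOn ℝ 2 σ U)
    (hu_eq : ∀ z ∈ U, flatLaplacian u z
      = 4 * (Real.exp (2 * u z) - Real.exp (-(2 * u z)) * ‖P z‖ ^ 2))
    (hσ_eq : ∀ z ∈ U, flatLaplacian σ z = 4 * Real.exp (2 * σ z))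
    (hmin : ∃ z₀ ∈ U, ∀ z ∈ U, u z₀ - σ z₀ ≤ u z - σ z) :
    ∀ z ∈ U, σ z ≤ u z :=
  statement6_general U hU P u σ hu hσ hu_eq hσ_eq hmin
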